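/- If all coefficients of the polynomial tr(F_k^σ M) = a f_k^σ + b h_k^σ + c t_k^σ + d g_k^σ with a > 0 are of the same sign, then they all have the sign (−1)^{k + #(σ)}, where #(σ) is the number of negative signs in σ. -/
import Mathlib

open Matrix MvPolynomial

/-- F_k = A^{x_1}B^{y_1}⋯A^{x_k}B^{y_k} as a matrix of real polynomials. -/
noncomputable def FmatR (k : ℕ) : Matrix (Fin 2) (Fin 2) (MvPolynomial (Fin k × Fin 2) ℝ) :=
  (List.ofFn (fun i : Fin k =>
    (!![1, 2 * X (i, 0); 0, 1] : Matrix (Fin 2) (Fin 2) (MvPolynomial (Fin k × Fin 2) ℝ)) *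
      !![1, 0; -2 * X (i, 1), 1])).prod

noncomputable def Gm (p : ℝ × ℝ) : Matrix (Fin 2) (Fin 2) (Polynomial ℝ) :=
  !![1, 2 * (Polynomial.C p.1 * (1 + Polynomial.X)); 0, 1] * !![1, 0; -2 * (Polynomial.C p.2 * (1 + Polynomial.X)), 1]

lemma Gm00 (p : ℝ × ℝ) : Gm p 0 0 = 1 + Polynomial.C (-(4*p.1*p.2)) * (1 + Polynomial.X)^2 := by
  rw [show ((-(4*p.1*p.2)):ℝ) = 4*(p.1*p.2) * (-1) by ring, _root_.map_mul, _root_.map_mul, map_neg, _root_.map_one,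
    map_ofNat]
  simp [Gm, Matrix.mul_apply, Fin.sum_univ_two, _root_.map_mul]
  ring

lemma Gm01 (p : ℝ × ℝ) : Gm p 0 1 = Polynomial.C (2*p.1) * (1 + Polynomial.X) := by
  rw [_root_.map_mul, map_ofNat]
  simp [Gm, Matrix.mul_apply, Fin.sum_univ_two]
  ring

lemma Gm10 (p : ℝ × ℝ) : Gm p 1 0 = Polynomial.C (-(2*p.2)) * (1 + Polynomial.X) := by
  rw [show ((-(2*p.2)):ℝ) = 2*p.2*(-1) by ring, _root_.map_mul, _root_.map_mul, map_neg, _root_.map_one, map_ofNat]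
  simp [Gm, Matrix.mul_apply, Fin.sum_univ_two]
  ring

lemma Gm11 (p : ℝ × ℝ) : Gm p 1 1 = 1 := by
  simp [Gm, Matrix.mul_apply, Fin.sum_univ_two]

noncomputable def Pm (l : List (ℝ × ℝ)) : Matrix (Fin 2) (Fin 2) (Polynomial ℝ) :=
  (l.map Gm).prod

lemma Pm_cons (p : ℝ × ℝ) (l : List (ℝ × ℝ)) : Pm (p :: l) = Gm p * Pm l := by
  simp [Pm]

lemma dGm00 (p : ℝ × ℝ) : (Gm p 0 0).natDegree ≤ 2 := by
  rw [Gm00]; compute_degree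

lemma dGm01 (p : ℝ × ℝ) : (Gm p 0 1).natDegree ≤ 1 := by
  rw [Gm01]; compute_degree

lemma dGm10 (p : ℝ × ℝ) : (Gm p 1 0).natDegree ≤ 1 := by
  rw [Gm10]; compute_degree

lemma dGm11 (p : ℝ × ℝ) : (Gm p 1 1).natDegree ≤ 0 := by
  rw [Gm11]; simp

lemma mul_entry (A B : Matrix (Fin 2) (Fin 2) (Polynomial ℝ)) (i j : Fin 2) :
    (A*B) i j = A i 0 * B 0 j + A i 1 * B 1 j := by
  simp [Matrix.mul_apply, Fin.sum_univ_two]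

lemma sq_expand : ((1:Polynomial ℝ) + Polynomial.X)^2 = 1 + 2*Polynomial.X + Polynomial.X^2 := by ring

lemma key : ∀ (l : List (ℝ × ℝ)) (p : ℝ × ℝ),
    (Pm (p::l) 0 0).natDegree ≤ 2 * (l.length + 1) ∧
    (Pm (p::l) 0 0).coeff (2 * (l.length + 1)) = ((p::l).map fun s => -(4*s.1*s.2)).prod ∧
    (Pm (p::l) 0 1).natDegree ≤ 2 * (l.length + 1) - 1 ∧
    (Pm (p::l) 1 0).natDegree ≤ 2 * (l.length + 1) - 1 ∧
    (Pm (p::l) 1 1).natDegree ≤ 2 * (l.length + 1) - 2 := by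
  intro l
  induction l with
  | nil =>
    intro p
    have hPm : Pm [p] = Gm p := by simp [Pm]
    rw [hPm]
    refine ⟨dGm00 p, ?_, by simpa using dGm01 p, by simpa using dGm10 p, by simp [Gm11]⟩
    rw [Gm00, sq_expand]
    have e : (1:Polynomial ℝ) + Polynomial.C (-(4*p.1*p.2)) * (1+2*Polynomial.X+Polynomial.X^2)
        = Polynomial.C (1 + -(4*p.1*p.2)) + Polynomial.C (2*(-(4*p.1*p.2)))*Polynomial.X
          + Polynomial.C (-(4*p.1*p.2)) * Polynomial.X^2 := by
      simp only [Polynomial.C_add, Polynomial.C_mul, Polynomial.C_1, map_ofNat]; ring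
    rw [e]
    simp only [Polynomial.coeff_add, Polynomial.coeff_C_mul, Polynomial.coeff_X_pow,
      Polynomial.coeff_X, Polynomial.coeff_C, List.map_cons, List.map_nil, List.prod_cons,
      List.prod_nil]
    norm_num
  | cons q l ih =>
    intro p
    obtain ⟨hA00d, hA00c, hA01, hA10, hA11⟩ := ih q
    simp only [List.length_cons] at *
    set A := Pm (q :: l) with hA
    have hent : ∀ i j, Pm (p :: q :: l) i j = Gm p i 0 * A 0 j + Gm p i 1 * A 1 j := by
      intro i j; rw [Pm_cons, mul_entry]
    refine ⟨?_, ?_, ?_, ?_, ?_⟩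
    · rw [hent]
      refine le_trans (Polynomial.natDegree_add_le _ _) (max_le ?_ ?_)
      · exact le_trans (Polynomial.natDegree_mul_le) (by have := dGm00 p; omega)
      · exact le_trans (Polynomial.natDegree_mul_le) (by have := dGm01 p; omega)
    · rw [hent, Polynomial.coeff_add]
      have h2 : (Gm p 0 1 * A 1 0).coeff (2 * (l.length + 1 + 1)) = 0 := by
        apply Polynomial.coeff_eq_zero_of_natDegree_lt
        exact lt_of_le_of_lt (Polynomial.natDegree_mul_le) (by have := dGm01 p; omega)
      rw [h2, add_zero, Gm00, sq_expand]
      have e : (1 + Polynomial.C (-(4*p.1*p.2)) * (1 + 2*Polynomial.X + Polynomial.X^2)) * A 0 0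
          = A 0 0 + Polynomial.C (-(4*p.1*p.2)) *
            (A 0 0 + Polynomial.C 2 * (Polynomial.X * (A 0 0)) + Polynomial.X^2 * (A 0 0)) := by
        simp only [map_ofNat]; ring
      rw [e, Polynomial.coeff_add, Polynomial.coeff_C_mul, Polynomial.coeff_add,
        Polynomial.coeff_add, Polynomial.coeff_C_mul]
      have z1 : (A 0 0).coeff (2 * (l.length + 1 + 1)) = 0 :=
        Polynomial.coeff_eq_zero_of_natDegree_lt (by omega)
      have e1 : 2 * (l.length + 1 + 1) = (2 * (l.length + 1) + 1) + 1 := by ring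
      have z2 : (Polynomial.X * A 0 0).coeff (2 * (l.length + 1 + 1)) = 0 := by
        rw [e1, Polynomial.coeff_X_mul]
        exact Polynomial.coeff_eq_zero_of_natDegree_lt (by omega)
      have e2 : 2 * (l.length + 1 + 1) = 2 * (l.length + 1) + 2 := by ring
      have z3 : (Polynomial.X^2 * A 0 0).coeff (2 * (l.length + 1 + 1))
          = ((q::l).map fun s => -(4*s.1*s.2)).prod := by
        rw [e2, Polynomial.coeff_X_pow_mul]; exact hA00c
      rw [z1, z2, z3]
      simp only [List.map_cons, List.prod_cons]
      ring
    · rw [hent]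
      refine le_trans (Polynomial.natDegree_add_le _ _) (max_le ?_ ?_)
      · exact le_trans (Polynomial.natDegree_mul_le) (by have := dGm00 p; omega)
      · exact le_trans (Polynomial.natDegree_mul_le) (by have := dGm01 p; omega)
    · rw [hent]
      refine le_trans (Polynomial.natDegree_add_le _ _) (max_le ?_ ?_)
      · exact le_trans (Polynomial.natDegree_mul_le) (by have := dGm10 p; omega)
      · exact le_trans (Polynomial.natDegree_mul_le) (by have := dGm11 p; omega)
    · rw [hent]
      refine le_trans (Polynomial.natDegree_add_le _ _) (max_le ?_ ?_)
      · exact le_trans (Polynomial.natDegree_mul_le) (by have := dGm10 p; omega)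
      · exact le_trans (Polynomial.natDegree_mul_le) (by have := dGm11 p; omega)

open MvPolynomial in
lemma coeff_aevalX {ι : Type*} (r : MvPolynomial ι ℝ) (n : ℕ) :
    ((MvPolynomial.aeval (fun _ : ι => (Polynomial.X : Polynomial ℝ))) r).coeff n
      = ∑ m ∈ r.support, (if n = (m.sum fun _ e => e) then r.coeff m else 0) := by
  conv_lhs => rw [r.as_sum]
  rw [map_sum, Polynomial.finset_sum_coeff]
  refine Finset.sum_congr rfl fun m hm => ?_
  rw [MvPolynomial.aeval_monomial]
  have hprod : (m.prod fun v e => (Polynomial.X : Polynomial ℝ) ^ e)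
      = Polynomial.X ^ (m.sum fun _ e => e) := by
    rw [Finsupp.prod, Finsupp.sum, Finset.prod_pow_eq_pow_sum]
  rw [hprod, Polynomial.algebraMap_eq, Polynomial.coeff_C_mul, Polynomial.coeff_X_pow]
  split <;> simp

open MvPolynomial in
lemma psi_F (k : ℕ) (σ : Fin k × Fin 2 → ℝ) :
    (RingHom.mapMatrix (MvPolynomial.aeval (R := ℝ)
        fun v : Fin k × Fin 2 => Polynomial.C (σ v) * (1 + Polynomial.X)).toRingHom) (FmatR k)
      = Pm (List.ofFn fun i : Fin k => (σ (i,0), σ (i,1))) := by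
  rw [FmatR, Pm, map_list_prod, List.map_ofFn, List.map_ofFn]
  refine congrArg _ (congrArg _ (funext fun i => ?_))
  simp only [Function.comp_apply, _root_.map_mul, Gm]
  congr 1 <;>
  · ext a b
    fin_cases a <;> fin_cases b <;>
      simp [RingHom.mapMatrix_apply, Matrix.map_apply]

/-- If all coefficients of tr(F_k^σ M) = a f_k^σ + b h_k^σ + c t_k^σ + d g_k^σ
with a > 0 are of the same sign, then that sign is (−1)^{k+#(σ)}, where #(σ) is
the number of negative signs in σ. -/
theorem stmt_16 (k : ℕ) (hk : 1 ≤ k) (M : Matrix (Fin 2) (Fin 2) ℝ) (ha : 0 < M 0 0)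
    (σ : Fin k × Fin 2 → ℝ) (hσ : ∀ v, σ v = 1 ∨ σ v = -1)
    (q : MvPolynomial (Fin k × Fin 2) ℝ)
    (hq : q = aeval (fun v : Fin k × Fin 2 => C (σ v) * (1 + X v))
      (C (M 0 0) * FmatR k 0 0 + C (M 1 0) * FmatR k 0 1 +
        C (M 0 1) * FmatR k 1 0 + C (M 1 1) * FmatR k 1 1))
    (hsign : (∀ m, 0 ≤ q.coeff m) ∨ (∀ m, q.coeff m ≤ 0)) :
    (Even (k + (Finset.univ.filter fun v : Fin k × Fin 2 => σ v = -1).card) →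
      ∀ m, 0 ≤ q.coeff m) ∧
    (¬ Even (k + (Finset.univ.filter fun v : Fin k × Fin 2 => σ v = -1).card) →
      ∀ m, q.coeff m ≤ 0) := by
  classical
  set cnt := (Finset.univ.filter fun v : Fin k × Fin 2 => σ v = -1).card with hcnt
  set l := List.ofFn (fun i : Fin k => (σ (i,0), σ (i,1))) with hl
  have hlen : l.length = k := by simp [hl]
  obtain ⟨p, t, hpt⟩ : ∃ p t, l = p :: t := by
    cases hc : l with
    | nil => rw [hc] at hlen; simp at hlen; omega
    | cons p t => exact ⟨p, t, rfl⟩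
  have htlen : t.length + 1 = k := by rw [← hlen, hpt]; rfl
  obtain ⟨hd00, hc00, hd01, hd10, hd11⟩ := key t p
  rw [← hpt] at hd00 hc00 hd01 hd10 hd11
  rw [htlen] at hd00 hc00 hd01 hd10 hd11
  -- express aeval X of q via Pm l
  have eentry : ∀ i j, (MvPolynomial.aeval
      (fun v : Fin k × Fin 2 => Polynomial.C (σ v) * (1 + Polynomial.X))) (FmatR k i j)
      = Pm l i j := by
    intro i j
    have hF := psi_F k σ
    calc (MvPolynomial.aeval (fun v : Fin k × Fin 2 => Polynomial.C (σ v) * (1 + Polynomial.X)))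
          (FmatR k i j)
        = ((RingHom.mapMatrix (MvPolynomial.aeval (R := ℝ)
            fun v : Fin k × Fin 2 => Polynomial.C (σ v) * (1 + Polynomial.X)).toRingHom)
            (FmatR k)) i j := by
          simp [RingHom.mapMatrix_apply, Matrix.map_apply]
      _ = Pm l i j := by rw [hF, hl]
  have hT : (MvPolynomial.aeval (fun _ : Fin k × Fin 2 => (Polynomial.X : Polynomial ℝ))) q
      = Polynomial.C (M 0 0) * Pm l 0 0 + Polynomial.C (M 1 0) * Pm l 0 1 +
        Polynomial.C (M 0 1) * Pm l 1 0 + Polynomial.C (M 1 1) * Pm l 1 1 := by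
    rw [hq, MvPolynomial.comp_aeval_apply]
    have hg : (fun v : Fin k × Fin 2 =>
        (MvPolynomial.aeval fun _ : Fin k × Fin 2 => (Polynomial.X : Polynomial ℝ))
          (MvPolynomial.C (σ v) * (1 + MvPolynomial.X v)))
        = fun v => Polynomial.C (σ v) * (1 + Polynomial.X) := by
      funext v
      simp [Polynomial.algebraMap_eq]
    rw [hg]
    simp only [_root_.map_add, _root_.map_mul, MvPolynomial.aeval_C, Polynomial.algebraMap_eq]
    rw [eentry, eentry, eentry, eentry]
  -- the product value
  have hprodl : ((l.map fun s => -(4*s.1*s.2)).prod : ℝ) = (-1:ℝ)^(k + cnt) * 4^k := by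
    rw [hl, List.map_ofFn, List.prod_ofFn]
    have e1 : ∀ i : Fin k, ((fun s : ℝ × ℝ => -(4*s.1*s.2)) ∘ fun i => (σ (i,0), σ (i,1))) i
        = (-4) * (σ (i,0) * σ (i,1)) := by intro i; simp; ring
    rw [Finset.prod_congr rfl (fun i _ => e1 i), Finset.prod_mul_distrib, Finset.prod_const]
    have e2 : ∏ i : Fin k, σ (i,0) * σ (i,1) = ∏ v : Fin k × Fin 2, σ v := by
      rw [Fintype.prod_prod_type]
      exact Finset.prod_congr rfl fun i _ => (Fin.prod_univ_two fun j => σ (i, j)).symm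
    have e3 : ∏ v : Fin k × Fin 2, σ v = (-1:ℝ)^cnt := by
      have : ∀ v ∈ Finset.univ, σ v = if σ v = -1 then (-1:ℝ) else 1 := by
        intro v _; rcases hσ v with h | h <;> rw [h] <;> norm_num
      rw [Finset.prod_congr rfl this, Finset.prod_ite, Finset.prod_const, Finset.prod_const,
        one_pow, mul_one, hcnt]
    rw [e2, e3, neg_pow, pow_add]
    norm_num
    ring
  -- coefficient of degree 2k
  have hcoeffT : ((MvPolynomial.aeval (fun _ : Fin k × Fin 2 => (Polynomial.X : Polynomial ℝ))) q).coeff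
      (2*k) = M 0 0 * ((-1:ℝ)^(k + cnt) * 4^k) := by
    rw [hT, Polynomial.coeff_add, Polynomial.coeff_add, Polynomial.coeff_add,
      Polynomial.coeff_C_mul, Polynomial.coeff_C_mul, Polynomial.coeff_C_mul,
      Polynomial.coeff_C_mul]
    have z01 : (Pm l 0 1).coeff (2*k) = 0 :=
      Polynomial.coeff_eq_zero_of_natDegree_lt (by omega)
    have z10 : (Pm l 1 0).coeff (2*k) = 0 :=
      Polynomial.coeff_eq_zero_of_natDegree_lt (by omega)
    have z11 : (Pm l 1 1).coeff (2*k) = 0 :=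
      Polynomial.coeff_eq_zero_of_natDegree_lt (by omega)
    rw [hc00, z01, z10, z11, hprodl]
    ring
  have hsum := coeff_aevalX q (2*k)
  have hfour : (0:ℝ) < 4^k := by positivity
  constructor
  · intro heven
    rcases hsign with h | h
    · exact h
    · exfalso
      have h1 : ((MvPolynomial.aeval (fun _ : Fin k × Fin 2 => (Polynomial.X : Polynomial ℝ))) q).coeff
          (2*k) ≤ 0 := by
        rw [hsum]
        refine Finset.sum_nonpos fun m _ => ?_
        split
        · exact h m
        · exact le_refl 0
      rw [hcoeffT, heven.neg_one_pow] at h1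
      nlinarith
  · intro hodd
    rcases hsign with h | h
    · exfalso
      have h1 : 0 ≤ ((MvPolynomial.aeval (fun _ : Fin k × Fin 2 => (Polynomial.X : Polynomial ℝ))) q).coeff
          (2*k) := by
        rw [hsum]
        refine Finset.sum_nonneg fun m _ => ?_
        split
        · exact h m
        · exact le_refl 0
      rw [hcoeffT, Odd.neg_one_pow (Nat.not_even_iff_odd.1 hodd)] at h1
      nlinarith
    · exact h
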